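/- Let 2 ≤ s < t < 2s and let T be any tree with degree sequence π_1 = (t, s,...,s (t times), 1,...,1 (t(s−1) times)). If t < 2s − 1, then (1/2) t (3t − t^2 − 5s + 2st + 3s^2) ≤ S(T) ≤ ts(s + t − 1); if t = 2s − 1, then (1/2)(2s − 1)(3s + 3s^2 − 4) ≤ S(T) ≤ s(2s − 1)(3s − 2). -/

import Mathlib

open Finset

noncomputable section

/-- Degree of a vertex (with classical decidability of adjacency). -/
def deg {V : Type*} [Fintype V] (G : SimpleGraph V) (v : V) : ℕ :=
  letI := Classical.decEq V
  letI := Classical.decRel G.Adj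
  G.degree v

/-- The finite set of edges of `G`. -/
def edgeF {V : Type*} [Fintype V] (G : SimpleGraph V) : Finset (Sym2 V) :=
  letI := Classical.decEq V
  letI := Classical.decRel G.Adj
  G.edgeFinset

/-- Sum of the degrees of the two endpoints of an edge. -/
def dsum {V : Type*} [Fintype V] (G : SimpleGraph V) : Sym2 V → ℝ :=
  Sym2.lift ⟨fun u v => (deg G u : ℝ) + deg G v, fun u v => by ring⟩

/-- Product of the degrees of the two endpoints of an edge. -/
def dprod {V : Type*} [Fintype V] (G : SimpleGraph V) : Sym2 V → ℝ :=
  Sym2.lift ⟨fun u v => (deg G u : ℝ) * deg G v, fun u v => by ring⟩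

/-- The second Zagreb index `S(G) = Σ_{(v_i,v_j) ∈ E} d_i d_j`. -/
def zagreb2 {V : Type*} [Fintype V] (G : SimpleGraph V) : ℝ :=
  ∑ e ∈ edgeF G, dprod G e

/-!
Writing `d_u d_v = s (d_u + d_v) - s² + (d_u - s)(d_v - s)` and summing over the edges gives
`S(T) = s Σ_v d_v² - s² |E| + Σ_{uv ∈ E} (d_u - s)(d_v - s)`, and the degree sequence fixes the
first two terms at `ts(t + s - 1)`. In a tree with this degree sequence no two leaves are adjacent
and only one vertex `w` has degree `t`, so the correction term only collects `(t - s)(1 - s) < 0`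
from the edges joining `w` to a leaf. At least one of the `t` edges at `w` leads to a vertex of
degree `s` (otherwise `T` would be a star), so the correction lies between
`(t - 1)(t - s)(1 - s)` and `0`.
-/

namespace SimpleGraph

section Connected

variable {V : Type*} {G : SimpleGraph V}

theorem Connected.mem_of_adj_closed (hG : G.Connected) {S : Set V} {a : V} (ha : a ∈ S)
    (hS : ∀ ⦃x y⦄, x ∈ S → G.Adj x y → y ∈ S) (v : V) : v ∈ S := by
  induction (G.reachable_iff_reflTransGen a v).1 (hG a v) with
  | refl => exact ha
  | tail _ hxy ih => exact hS ih hxy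

variable [G.LocallyFinite]

theorem eq_of_adj_of_degree_eq_one {u a b : V} (hu : G.degree u = 1) (ha : G.Adj u a)
    (hb : G.Adj u b) : a = b :=
  (degree_eq_one_iff_existsUnique_adj.1 hu).unique ha hb

theorem Connected.not_adj_of_degree_eq_one (hG : G.Connected) {u v x : V}
    (hu : G.degree u = 1) (hv : G.degree v = 1) (hx : G.degree x ≠ 1) : ¬G.Adj u v := by
  intro huv
  have hclosed : ∀ ⦃y z⦄, y ∈ ({u, v} : Set V) → G.Adj y z → z ∈ ({u, v} : Set V) := by
    rintro y z (rfl | rfl) hyz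
    · exact Or.inr (eq_of_adj_of_degree_eq_one hu hyz huv)
    · exact Or.inl (eq_of_adj_of_degree_eq_one hv hyz huv.symm)
  rcases hG.mem_of_adj_closed (Set.mem_insert u _) hclosed x with rfl | rfl <;> contradiction

theorem Connected.exists_adj_degree_ne_one (hG : G.Connected) {w x : V} (hxw : x ≠ w)
    (hx : G.degree x ≠ 1) : ∃ y, G.Adj w y ∧ G.degree y ≠ 1 := by
  by_contra! hleaves
  have hclosed : ∀ ⦃y z⦄, y ∈ {y | y = w ∨ G.Adj w y} → G.Adj y z →
      z ∈ {y | y = w ∨ G.Adj w y} := by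
    rintro y z (rfl | hwy) hyz
    · exact Or.inr hyz
    · exact Or.inl (eq_of_adj_of_degree_eq_one (hleaves y hwy) hyz hwy.symm)
  rcases hG.mem_of_adj_closed (Or.inl rfl) hclosed x with rfl | hwx
  exacts [hxw rfl, hx (hleaves x hwx)]

end Connected

variable {V : Type*} [Fintype V] (G : SimpleGraph V)

theorem deg_eq_degree [DecidableRel G.Adj] (v : V) : deg G v = G.degree v := by
  unfold deg
  congr!

theorem edgeF_eq_edgeFinset [DecidableEq V] [DecidableRel G.Adj] : edgeF G = G.edgeFinset := by
  unfold edgeF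
  congr!

section DartSums

variable [DecidableEq V] [DecidableRel G.Adj]

theorem sum_dart_fst (f : V → ℝ) : ∑ d : G.Dart, f d.fst = ∑ v, G.degree v * f v := by
  rw [← sum_fiberwise_of_maps_to (g := fun d : G.Dart => d.fst) (t := univ)
    fun _ _ => mem_univ _]
  refine sum_congr rfl fun v _ => ?_
  rw [sum_congr rfl fun d hd => by rw [(mem_filter.1 hd).2], sum_const,
    dart_fst_fiber_card_eq_degree, nsmul_eq_mul]

theorem sum_dart_edge (g : Sym2 V → ℝ) :
    ∑ d : G.Dart, g d.edge = 2 * ∑ e ∈ G.edgeFinset, g e := by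
  rw [← sum_fiberwise_of_maps_to (g := Dart.edge) (t := G.edgeFinset)
    (fun d _ => G.mem_edgeFinset.2 d.edge_mem), mul_sum]
  refine sum_congr rfl fun e he => ?_
  rw [sum_congr rfl fun d hd => by rw [(mem_filter.1 hd).2], sum_const,
    dart_edge_fiber_card G e (G.mem_edgeFinset.1 he), two_nsmul, two_mul]

theorem sum_edgeFinset_lift_add (f : V → ℝ) :
    ∑ e ∈ G.edgeFinset, Sym2.lift ⟨fun u v => f u + f v, fun _ _ => add_comm _ _⟩ e =
      ∑ v, G.degree v * f v := by
  have hsnd : ∑ d : G.Dart, f d.snd = ∑ d : G.Dart, f d.fst :=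
    Fintype.sum_equiv Dart.symm_involutive.toPerm _ _ fun _ => rfl
  have h := G.sum_dart_edge (Sym2.lift ⟨fun u v => f u + f v, fun _ _ => add_comm _ _⟩)
  simp only [Dart.edge, Sym2.lift_mk, sum_add_distrib, hsnd, sum_dart_fst] at h
  linarith

end DartSums


variable {V : Type*} [Fintype V] (G : SimpleGraph V) [DecidableRel G.Adj]

def degShiftProd (c : ℝ) : Sym2 V → ℝ :=
  Sym2.lift ⟨fun u v => ((G.degree u : ℝ) - c) * (G.degree v - c), fun _ _ => mul_comm _ _⟩

@[simp]
theorem degShiftProd_mk (c : ℝ) (u v : V) :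
    G.degShiftProd c s(u, v) = ((G.degree u : ℝ) - c) * (G.degree v - c) :=
  rfl

theorem zagreb2_eq_add_sum_degShiftProd [DecidableEq V] (c : ℝ) :
    zagreb2 G = c * ∑ v, (G.degree v : ℝ) ^ 2 - c ^ 2 * #G.edgeFinset +
      ∑ e ∈ G.edgeFinset, G.degShiftProd c e := by
  have hedge : ∀ e, dprod G e = c * Sym2.lift ⟨fun u v => (G.degree u : ℝ) + G.degree v,
      fun _ _ => add_comm _ _⟩ e - c ^ 2 + G.degShiftProd c e := by
    intro e
    induction e using Sym2.ind with
    | _ u v =>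
      simp only [dprod, Sym2.lift_mk, degShiftProd_mk, deg_eq_degree]
      ring
  rw [zagreb2, edgeF_eq_edgeFinset, sum_congr rfl fun e _ => hedge e, sum_add_distrib,
    sum_sub_distrib, ← mul_sum, sum_edgeFinset_lift_add, sum_const, nsmul_eq_mul]
  simp only [sq]
  ring

section DegreeSequencePi1

variable {V : Type*} [Fintype V] {T : SimpleGraph V} [DecidableRel T.Adj]
  {s t : ℕ} {w : V}

theorem sum_comp_degree_eq_of_pi1 (hs : 2 ≤ s) (hst : s < t)
    (hdeg : ∀ v, T.degree v = t ∨ T.degree v = s ∨ T.degree v = 1)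
    (hct : #{v | T.degree v = t} = 1) (hcs : #{v | T.degree v = s} = t)
    (hc1 : #{v | T.degree v = 1} = t * (s - 1)) (f : ℕ → ℝ) :
    ∑ v, f (T.degree v) = f t + t * f s + t * (s - 1) * f 1 := by
  rw [← sum_fiberwise_of_maps_to' (t := {t, s, 1}) fun v _ => by simpa using hdeg v,
    sum_insert (by simp; omega), sum_insert (by simp; omega), sum_singleton]
  simp only [sum_const, hct, hcs, hc1, nsmul_eq_mul]
  push_cast [Nat.cast_sub (by omega : 1 ≤ s)]
  ring

theorem zagreb2_eq_add_sum_degShiftProd_of_pi1 [DecidableEq V] (hs : 2 ≤ s) (hst : s < t)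
    (hdeg : ∀ v, T.degree v = t ∨ T.degree v = s ∨ T.degree v = 1)
    (hct : #{v | T.degree v = t} = 1) (hcs : #{v | T.degree v = s} = t)
    (hc1 : #{v | T.degree v = 1} = t * (s - 1)) :
    zagreb2 T = t * s * (s + t - 1) + ∑ e ∈ T.edgeFinset, T.degShiftProd s e := by
  have hcount := sum_comp_degree_eq_of_pi1 hs hst hdeg hct hcs hc1
  have hE : (#T.edgeFinset : ℝ) = t * s := by
    have h := hcount Nat.cast
    rw [← Nat.cast_sum, sum_degrees_eq_twice_card_edges] at h
    push_cast at h
    linarith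
  rw [zagreb2_eq_add_sum_degShiftProd T s, hcount (fun d => (d : ℝ) ^ 2), hE]
  ring

variable (hT : T.Connected) (hdeg : ∀ v, T.degree v = t ∨ T.degree v = s ∨ T.degree v = 1)
  (hw : ∀ v, T.degree v = t ↔ v = w)
include hT hdeg hw

theorem degShiftProd_eq_zero_or (ht : t ≠ 1) {e : Sym2 V} (he : e ∈ T.edgeFinset) :
    T.degShiftProd s e = 0 ∨ (w ∈ e ∧ T.degShiftProd s e = ((t : ℝ) - s) * (1 - s)) := by
  induction e using Sym2.ind with
  | _ u v =>
    have huv : T.Adj u v := mem_edgeFinset.1 he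
    have hwt : T.degree w ≠ 1 := by rwa [(hw w).2 rfl]
    simp only [degShiftProd_mk, Sym2.mem_iff]
    rcases hdeg u with hu | hu | hu <;> rcases hdeg v with hv | hv | hv
    · exact absurd (((hw u).1 hu).trans ((hw v).1 hv).symm) huv.ne
    · simp [hv]
    · exact Or.inr ⟨Or.inl ((hw u).1 hu).symm, by rw [hu, hv]; push_cast; ring⟩
    · simp [hu]
    · simp [hu]
    · simp [hu]
    · exact Or.inr ⟨Or.inr ((hw v).1 hv).symm, by rw [hu, hv]; push_cast; ring⟩
    · simp [hv]
    · exact absurd huv (hT.not_adj_of_degree_eq_one hu hv hwt)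

theorem sum_degShiftProd_nonpos (hs : 2 ≤ s) (hst : s < t) :
    ∑ e ∈ T.edgeFinset, T.degShiftProd s e ≤ 0 := by
  have hsR : (2 : ℝ) ≤ s := by exact_mod_cast hs
  have hstR : (s : ℝ) < t := by exact_mod_cast hst
  refine sum_nonpos fun e he => ?_
  rcases degShiftProd_eq_zero_or hT hdeg hw (by omega) he with h | ⟨_, h⟩ <;> rw [h]
  nlinarith

theorem le_sum_degShiftProd [DecidableEq V] (hs : 2 ≤ s) (hst : s < t) {x : V}
    (hx : T.degree x = s) :
    ((t : ℝ) - 1) * (((t : ℝ) - s) * (1 - s)) ≤ ∑ e ∈ T.edgeFinset, T.degShiftProd s e := by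
  have hsR : (2 : ℝ) ≤ s := by exact_mod_cast hs
  have hstR : (s : ℝ) < t := by exact_mod_cast hst
  have hwt : T.degree w = t := (hw w).2 rfl
  obtain ⟨y, hwy, hy1⟩ := hT.exists_adj_degree_ne_one (x := x) (w := w)
    (fun h => by rw [h, hwt] at hx; omega) (by omega)
  have hys : T.degree y = s := by
    rcases hdeg y with h | h | h
    exacts [absurd ((hw y).1 h) hwy.ne', h, absurd h hy1]
  have hwy_mem : s(w, y) ∈ T.incidenceFinset w := by
    simpa [mem_incidenceFinset] using hwy
  have hterm := fun e (he : e ∈ T.edgeFinset) => degShiftProd_eq_zero_or hT hdeg hw (by omega) he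
  calc ((t : ℝ) - 1) * (((t : ℝ) - s) * (1 - s))
      = #((T.incidenceFinset w).erase s(w, y)) • (((t : ℝ) - s) * (1 - s)) := by
        rw [card_erase_of_mem hwy_mem, card_incidenceFinset_eq_degree, hwt, nsmul_eq_mul,
          Nat.cast_sub (by omega)]
        push_cast
        ring
    _ ≤ ∑ e ∈ (T.incidenceFinset w).erase s(w, y), T.degShiftProd s e := by
        refine card_nsmul_le_sum _ _ _ fun e he => ?_
        rcases hterm e (incidenceFinset_subset T w (mem_of_mem_erase he)) with h | ⟨_, h⟩ <;>
          rw [h]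
        nlinarith
    _ = ∑ e ∈ T.incidenceFinset w, T.degShiftProd s e := by
        rw [← add_sum_erase _ _ hwy_mem, degShiftProd_mk, hys, sub_self, mul_zero, zero_add]
    _ = ∑ e ∈ T.edgeFinset, T.degShiftProd s e := by
        refine sum_subset (incidenceFinset_subset T w) fun e he hew => ?_
        rcases hterm e he with h | ⟨hwe, _⟩
        exacts [h, absurd ((mem_incidenceFinset T w e).2 ⟨mem_edgeFinset.1 he, hwe⟩) hew]

end DegreeSequencePi1

end SimpleGraph

open SimpleGraph in
theorem zagreb2_bounds_of_tree_pi1_general {V : Type*} [Fintype V]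
    (T : SimpleGraph V) (hT : T.IsTree)
    (s t : ℕ) (hs : 2 ≤ s) (hst : s < t)
    (hdegs : ∀ v : V, deg T v = t ∨ deg T v = s ∨ deg T v = 1)
    (hct : (Finset.univ.filter fun v => deg T v = t).card = 1)
    (hcs : (Finset.univ.filter fun v => deg T v = s).card = t)
    (hc1 : (Finset.univ.filter fun v => deg T v = 1).card = t * (s - 1)) :
    (t < 2 * s - 1 →
      1 / 2 * (t : ℝ) * (3 * t - t ^ 2 - 5 * s + 2 * s * t + 3 * s ^ 2) ≤ zagreb2 T ∧
      zagreb2 T ≤ (t : ℝ) * s * (s + t - 1)) ∧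
    (t = 2 * s - 1 →
      1 / 2 * (2 * (s : ℝ) - 1) * (3 * s + 3 * s ^ 2 - 4) ≤ zagreb2 T ∧
      zagreb2 T ≤ (s : ℝ) * (2 * s - 1) * (3 * s - 2)) := by
  classical
  simp only [deg_eq_degree] at hdegs hct hcs hc1
  obtain ⟨w, hw⟩ := card_eq_one.1 hct
  have hwt : ∀ v, T.degree v = t ↔ v = w := fun v => by simpa using Finset.ext_iff.1 hw v
  obtain ⟨x, hx⟩ := card_pos.1 (hcs ▸ (by omega : 0 < t))
  have hS := zagreb2_eq_add_sum_degShiftProd_of_pi1 hs hst hdegs hct hcs hc1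
  have hup := sum_degShiftProd_nonpos hT.connected hdegs hwt hs hst
  have hlow := le_sum_degShiftProd hT.connected hdegs hwt hs hst (mem_filter.1 hx).2
  have hsR : (2 : ℝ) ≤ s := by exact_mod_cast hs
  have hstR : (s : ℝ) + 1 ≤ t := by exact_mod_cast hst
  have lower : 1 / 2 * (t : ℝ) * (3 * t - t ^ 2 - 5 * s + 2 * s * t + 3 * s ^ 2) ≤ zagreb2 T := by
    rw [hS]
    -- twice the gap to `ts(t + s - 1) + (t - 1)(t - s)(1 - s)` is `(t - s)(t(t - s - 1) + 2(s - 1))`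
    nlinarith [mul_nonneg (by linarith : (0 : ℝ) ≤ t - s)
      (by nlinarith : (0 : ℝ) ≤ t * (t - s - 1) + 2 * (s - 1))]
  have upper : zagreb2 T ≤ (t : ℝ) * s * (s + t - 1) := by linarith
  refine ⟨fun _ => ⟨lower, upper⟩, fun h => ?_⟩
  have htR : (t : ℝ) = 2 * s - 1 := by
    rw [h, Nat.cast_sub (by omega)]
    push_cast
    ring
  rw [htR] at lower upper
  constructor <;> linarith

/-- Bounds for the second Zagreb index of any tree with degree sequence
`π₁ = (t, s,...,s (t times), 1,...,1 (t(s-1) times))`, `2 ≤ s < t < 2s`. -/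
theorem zagreb2_bounds_of_tree_pi1 {V : Type*} [Fintype V]
    (T : SimpleGraph V) (hT : T.IsTree)
    (s t : ℕ) (hs : 2 ≤ s) (hst : s < t) (hts : t < 2 * s)
    (hdegs : ∀ v : V, deg T v = t ∨ deg T v = s ∨ deg T v = 1)
    (hct : (Finset.univ.filter fun v => deg T v = t).card = 1)
    (hcs : (Finset.univ.filter fun v => deg T v = s).card = t)
    (hc1 : (Finset.univ.filter fun v => deg T v = 1).card = t * (s - 1)) :
    (t < 2 * s - 1 →
      1 / 2 * (t : ℝ) * (3 * t - t ^ 2 - 5 * s + 2 * s * t + 3 * s ^ 2) ≤ zagreb2 T ∧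
      zagreb2 T ≤ (t : ℝ) * s * (s + t - 1)) ∧
    (t = 2 * s - 1 →
      1 / 2 * (2 * (s : ℝ) - 1) * (3 * s + 3 * s ^ 2 - 4) ≤ zagreb2 T ∧
      zagreb2 T ≤ (s : ℝ) * (2 * s - 1) * (3 * s - 2)) :=
  zagreb2_bounds_of_tree_pi1_general T hT s t hs hst hdegs hct hcs hc1
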